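/- Let n ≥ 5 and let w_0 ∈ S_n be the longest element, w_0(i) = n+1−i. For f : S_n → ℤ[t_1,…,t_n] define f^∨ by f^∨(w) = f(w∘w_0). Then: (1) x_k^∨ = x_{n+1−k}, τ_k^∨ = −ρ_k, and ρ_k^∨ = −τ_k for every k ∈ [n]; and (2) for the Hessenberg function h = h_n = (2, n−1, …, n−1, n, n), if f belongs to the GKM ring H(h_n) then f^∨ also belongs to H(h_n), so f ↦ f^∨ is a ring involution of H(h_n). -/
import Mathlib


open MvPolynomial

/-- The GKM condition: `f` belongs to the GKM ring `H(h)` of the Hessenberg function `h`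
(0-based indexing: position `j : Fin n` corresponds to `j+1 ∈ [n]`). -/
def InGKM {n : ℕ} (h : Fin n → Fin n)
    (f : Equiv.Perm (Fin n) → MvPolynomial (Fin n) ℤ) : Prop :=
  ∀ (w : Equiv.Perm (Fin n)) (i j : Fin n), j < i → i ≤ h j →
    f w - f (w * Equiv.swap i j) ∈ Ideal.span {X (w i) - X (w j)}

/-- let `n ≥ 5` and let `w_0` be the longest element, `w_0(i) = n+1−i`
(0-based: `Fin.revPerm`, `i ↦ n-1-i`).  Define `f^∨(w) = f(w∘w_0)`.  Then:
(1) `x_k^∨ = x_{n+1−k}` (0-based: `x_{k.rev}`), `τ_k^∨ = −ρ_k`, `ρ_k^∨ = −τ_k`;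
(2) for `h = h_n = (2, n−1, …, n−1, n, n)`, if `f ∈ H(h_n)` then `f^∨ ∈ H(h_n)`;
and `f ↦ f^∨` is an involution: `(f^∨)^∨ = f`. -/
theorem dual_involution (n : ℕ) (hn : 5 ≤ n) (h : Fin n → Fin n)
    (hval : ∀ j : Fin n, (h j : ℕ) =
      if (j : ℕ) = 0 then 1 else if (j : ℕ) + 2 < n then n - 2 else n - 1) :
    let dual : (Equiv.Perm (Fin n) → MvPolynomial (Fin n) ℤ) →
        (Equiv.Perm (Fin n) → MvPolynomial (Fin n) ℤ) := fun f w => f (w * Fin.revPerm)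
    let x : Fin n → Equiv.Perm (Fin n) → MvPolynomial (Fin n) ℤ := fun k w => X (w k)
    let τ : Fin n → Equiv.Perm (Fin n) → MvPolynomial (Fin n) ℤ := fun k w =>
      if w ⟨0, by omega⟩ = k then X (w ⟨0, by omega⟩) - X (w ⟨1, by omega⟩) else 0
    let ρ : Fin n → Equiv.Perm (Fin n) → MvPolynomial (Fin n) ℤ := fun k w =>
      if w ⟨n - 1, by omega⟩ = k then X (w ⟨n - 2, by omega⟩) - X (w ⟨n - 1, by omega⟩) else 0
    (∀ k : Fin n, dual (x k) = x k.rev) ∧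
    (∀ k : Fin n, dual (τ k) = - ρ k) ∧
    (∀ k : Fin n, dual (ρ k) = - τ k) ∧
    (∀ f : Equiv.Perm (Fin n) → MvPolynomial (Fin n) ℤ, InGKM h f → InGKM h (dual f)) ∧
    (∀ f : Equiv.Perm (Fin n) → MvPolynomial (Fin n) ℤ, dual (dual f) = f) := by
  intro dual x τ ρ
  have h0 : 0 < n := by omega
  have hrev0 : Fin.rev (⟨0, by omega⟩ : Fin n) = ⟨n - 1, by omega⟩ := by
    apply Fin.ext; simp [Fin.val_rev]
  have hrev1 : Fin.rev (⟨1, by omega⟩ : Fin n) = ⟨n - 2, by omega⟩ := by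
    apply Fin.ext; simp [Fin.val_rev]
  have hrevn1 : Fin.rev (⟨n - 1, by omega⟩ : Fin n) = ⟨0, by omega⟩ := by
    apply Fin.ext; simp only [Fin.val_rev]; omega
  have hrevn2 : Fin.rev (⟨n - 2, by omega⟩ : Fin n) = ⟨1, by omega⟩ := by
    apply Fin.ext; simp only [Fin.val_rev]; omega
  have hsq : (Fin.revPerm : Equiv.Perm (Fin n)) * Fin.revPerm = 1 := by
    ext a; simp [Fin.rev_rev]
  refine ⟨?_, ?_, ?_, ?_, ?_⟩
  · intro k
    funext w
    simp [dual, x, Equiv.Perm.mul_apply, Fin.revPerm_apply]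
  · intro k
    funext w
    simp only [dual, τ, ρ, Equiv.Perm.mul_apply, Fin.revPerm_apply, hrev0, hrev1, Pi.neg_apply]
    split <;> ring
  · intro k
    funext w
    simp only [dual, τ, ρ, Equiv.Perm.mul_apply, Fin.revPerm_apply, hrevn1, hrevn2, Pi.neg_apply]
    split <;> ring
  · intro f hf w i j hji hij
    have conj : (Fin.revPerm : Equiv.Perm (Fin n)) * Equiv.swap i.rev j.rev
        = Equiv.swap i j * Fin.revPerm := by
      have := Equiv.mul_swap_eq_swap_mul (Fin.revPerm : Equiv.Perm (Fin n)) i.rev j.rev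
      simpa [Fin.rev_rev] using this
    have key : w * Equiv.swap i j * Fin.revPerm
        = (w * Fin.revPerm) * Equiv.swap j.rev i.rev := by
      rw [Equiv.swap_comm j.rev i.rev, mul_assoc, ← conj, ← mul_assoc]
    have hlt : i.rev < j.rev := Fin.rev_lt_rev.mpr hji
    have hle : j.rev ≤ h i.rev := by
      have h1 := hval j
      have h2 := hval i.rev
      rw [Fin.le_def, Fin.val_rev]
      rw [Fin.val_rev] at h2
      have hi := i.isLt
      have hj := j.isLt
      have hji' : (j : ℕ) < i := hji
      have hij' : (i : ℕ) ≤ (h j : ℕ) := hij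
      split_ifs at h1 h2 <;> omega
    have hmem := hf (w * Fin.revPerm) j.rev i.rev hlt hle
    simp only [Equiv.Perm.mul_apply, Fin.revPerm_apply, Fin.rev_rev] at hmem
    show f (w * Fin.revPerm) - f (w * Equiv.swap i j * Fin.revPerm)
        ∈ Ideal.span {(X (w i) - X (w j) : MvPolynomial (Fin n) ℤ)}
    rw [key]
    have hneg : (X (w i) - X (w j) : MvPolynomial (Fin n) ℤ) = -(X (w j) - X (w i)) := by ring
    rw [hneg, Ideal.span_singleton_neg]
    exact hmem
  · intro f
    funext w
    simp only [dual, mul_assoc, hsq, mul_one]
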